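/- If r is a random vector in ℝ^n with i.i.d. Rademacher components, then for any symmetric matrix H, the variance of the Hutchinson estimator rᵀ H r equals 2(‖H‖_F² − Σᵢ Hᵢᵢ²), where ‖H‖_F is the Frobenius norm. -/

import Mathlib

/-!
Since each `rᵢ = ±1` a.s., independence gives `E[∏ₘ rₘ ^ eₘ] = 1` if every exponent `eₘ` is even
and `0` otherwise. Hence `E[rᵢ rⱼ] = δᵢⱼ` and
`E[rᵢ rⱼ rₖ rₗ] = δᵢⱼ δₖₗ + δᵢₖ δⱼₗ + δᵢₗ δⱼₖ - 2 δᵢⱼₖₗ`: the Gaussian pairings, corrected because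
`E[rᵢ⁴] = 1` rather than `3`. Expanding the first two moments of `rᵀ H r` against these tensors gives
`E[rᵀ H r] = tr H` and, for symmetric `H`, `E[(rᵀ H r)²] = (tr H)² + 2 (‖H‖_F² - Σᵢ Hᵢᵢ²)`.
-/

open MeasureTheory Matrix ProbabilityTheory

/-- Rademacher distribution on `ℝ`: `±1` with probability `1/2` each. -/
noncomputable def rademacher : Measure ℝ :=
  ((1 : ENNReal) / 2) • Measure.dirac (1 : ℝ)
    + ((1 : ENNReal) / 2) • Measure.dirac (-1 : ℝ)

open Finset

lemma integral_rademacher (f : ℝ → ℝ) : ∫ x, f x ∂rademacher = (f 1 + f (-1)) / 2 := by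
  have hint (a : ℝ) : Integrable f (((1 : ENNReal) / 2) • Measure.dirac a) :=
    (integrable_dirac enorm_lt_top).smul_measure (by norm_num)
  rw [rademacher, integral_add_measure (hint 1) (hint (-1)), integral_smul_measure,
    integral_smul_measure, integral_dirac, integral_dirac]
  norm_num
  ring

lemma integral_pow_rademacher (k : ℕ) :
    ∫ x, x ^ k ∂rademacher = if Even k then 1 else 0 := by
  rcases Nat.even_or_odd k with hk | hk
  · simp [integral_rademacher, hk, hk.neg_one_pow]
  · simp [integral_rademacher, hk.neg_one_pow, Nat.not_even_iff_odd.mpr hk]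

lemma ae_abs_eq_one_rademacher : ∀ᵐ x ∂rademacher, |x| = 1 := by
  simp [rademacher, ae_dirac_eq]

namespace Multiset

variable {ι : Type*} [DecidableEq ι]

lemma prod_map_eq_prod_pow_count {M : Type*} [Fintype ι] [CommMonoid M] (s : Multiset ι)
    (f : ι → M) : (s.map f).prod = ∏ i, f i ^ s.count i := by
  rw [Finset.prod_multiset_map_count]
  exact prod_subset (subset_univ _) fun i _ hi => by
    rw [count_eq_zero_of_notMem (mem_toFinset.not.mp hi), pow_zero]

lemma forall_even_count_pair_iff (i j : ι) :
    (∀ m, Even (({i, j} : Multiset ι).count m)) ↔ i = j := by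
  constructor
  · intro h
    by_contra hij
    simpa [count_cons, hij, Ne.symm hij] using h i
  · rintro rfl m
    by_cases h : m = i <;> simp [h]

lemma forall_even_count_quadruple_iff (i j k l : ι) :
    (∀ m, Even (({i, j, k, l} : Multiset ι).count m)) ↔
      (i = j ∧ k = l) ∨ (i = k ∧ j = l) ∨ (i = l ∧ j = k) := by
  simp only [insert_eq_cons, count_cons, count_singleton]
  constructor
  · intro h
    have hi := h i; have hj := h j; have hk := h k
    by_cases h1 : i = j <;> by_cases h2 : i = k <;> by_cases h3 : i = l <;>
      by_cases h4 : j = k <;> by_cases h5 : j = l <;> by_cases h6 : k = l <;>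
      simp_all [Nat.even_iff, eq_comm]
  · rintro (⟨rfl, rfl⟩ | ⟨rfl, rfl⟩ | ⟨rfl, rfl⟩) m <;> split_ifs <;> decide

end Multiset

section QuadraticForm

variable {Ω ι : Type*} [MeasurableSpace Ω] {μ : Measure Ω} [Fintype ι] {r : Ω → ι → ℝ}

lemma Matrix.dotProduct_mulVec_self_eq_sum (H : Matrix ι ι ℝ) (v : ι → ℝ) :
    v ⬝ᵥ H *ᵥ v = ∑ i, ∑ j, H i j * (v i * v j) := by
  simp only [dotProduct, mulVec, Finset.mul_sum]
  exact sum_congr rfl fun i _ => sum_congr rfl fun j _ => by ring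

lemma Matrix.sq_dotProduct_mulVec_self_eq_sum (H : Matrix ι ι ℝ) (v : ι → ℝ) :
    (v ⬝ᵥ H *ᵥ v) ^ 2 = ∑ i, ∑ j, ∑ k, ∑ l, H i j * H k l * (v i * v j * v k * v l) := by
  simp only [dotProduct_mulVec_self_eq_sum, sq, sum_mul_sum]
  refine sum_congr rfl fun i _ => sum_comm.trans ?_
  exact sum_congr rfl fun j _ => sum_congr rfl fun k _ => sum_congr rfl fun l _ => by ring

lemma integral_dotProduct_mulVec_self (H : Matrix ι ι ℝ)
    (hint : ∀ i j, Integrable (fun ω => r ω i * r ω j) μ) :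
    ∫ ω, r ω ⬝ᵥ H *ᵥ r ω ∂μ = ∑ i, ∑ j, H i j * ∫ ω, r ω i * r ω j ∂μ := by
  simp_rw [dotProduct_mulVec_self_eq_sum]
  simp (disch := intros; fun_prop) only [integral_finsetSum, integral_const_mul]

lemma integral_sq_dotProduct_mulVec_self (H : Matrix ι ι ℝ)
    (hint : ∀ i j k l, Integrable (fun ω => r ω i * r ω j * r ω k * r ω l) μ) :
    ∫ ω, (r ω ⬝ᵥ H *ᵥ r ω) ^ 2 ∂μ =
      ∑ i, ∑ j, ∑ k, ∑ l, H i j * H k l * ∫ ω, r ω i * r ω j * r ω k * r ω l ∂μ := by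
  simp_rw [sq_dotProduct_mulVec_self_eq_sum]
  simp (disch := intros; fun_prop) only [integral_finsetSum, integral_const_mul]

lemma memLp_two_dotProduct_mulVec_self (H : Matrix ι ι ℝ)
    (hmeas : ∀ i, Measurable fun ω => r ω i)
    (hint : ∀ i j k l, Integrable (fun ω => r ω i * r ω j * r ω k * r ω l) μ) :
    MemLp (fun ω => r ω ⬝ᵥ H *ᵥ r ω) 2 μ := by
  refine (memLp_two_iff_integrable_sq
    (by simp_rw [dotProduct_mulVec_self_eq_sum]; fun_prop)).mpr ?_
  simp_rw [sq_dotProduct_mulVec_self_eq_sum]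
  fun_prop (disch := exact hint _ _ _ _)

end QuadraticForm

section RademacherFamily

variable {Ω ι : Type*} [MeasurableSpace Ω] {μ : Measure Ω} [Fintype ι] {r : Ω → ι → ℝ}

lemma ae_abs_eq_one_of_rademacher (hmeas : ∀ i, Measurable fun ω => r ω i)
    (hdist : ∀ i, μ.map (fun ω => r ω i) = rademacher) : ∀ᵐ ω ∂μ, ∀ i, |r ω i| = 1 :=
  ae_all_iff.mpr fun i =>
    ae_of_ae_map (hmeas i).aemeasurable (by rw [hdist i]; exact ae_abs_eq_one_rademacher)

lemma integrable_multiset_prod_of_rademacher [IsFiniteMeasure μ]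
    (hmeas : ∀ i, Measurable fun ω => r ω i)
    (hdist : ∀ i, μ.map (fun ω => r ω i) = rademacher) (s : Multiset ι) :
    Integrable (fun ω => (s.map (r ω)).prod) μ := by
  classical
  simp_rw [Multiset.prod_map_eq_prod_pow_count]
  refine .of_bound (by fun_prop) 1 ?_
  filter_upwards [ae_abs_eq_one_of_rademacher hmeas hdist] with ω hω
  simp [hω]

variable [DecidableEq ι]

lemma integral_multiset_prod_of_rademacher (hmeas : ∀ i, Measurable fun ω => r ω i)
    (hindep : iIndepFun (fun i ω => r ω i) μ)
    (hdist : ∀ i, μ.map (fun ω => r ω i) = rademacher) (s : Multiset ι) :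
    ∫ ω, (s.map (r ω)).prod ∂μ = if ∀ i, Even (s.count i) then 1 else 0 := by
  have hmoment (i : ι) : ∫ ω, r ω i ^ s.count i ∂μ = if Even (s.count i) then 1 else 0 := by
    rw [← integral_map (f := fun x : ℝ => x ^ s.count i) (hmeas i).aemeasurable (by fun_prop),
      hdist, integral_pow_rademacher]
  simp_rw [Multiset.prod_map_eq_prod_pow_count]
  rw [hindep.integral_fun_prod_comp (f := fun i x => x ^ s.count i)
    (fun i => (hmeas i).aemeasurable) (fun i => by fun_prop)]
  simp [hmoment, prod_ite_zero]

lemma integral_mul_of_rademacher (hmeas : ∀ i, Measurable fun ω => r ω i)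
    (hindep : iIndepFun (fun i ω => r ω i) μ)
    (hdist : ∀ i, μ.map (fun ω => r ω i) = rademacher) (i j : ι) :
    ∫ ω, r ω i * r ω j ∂μ = if i = j then 1 else 0 := by
  have h := integral_multiset_prod_of_rademacher hmeas hindep hdist {i, j}
  simp only [Multiset.forall_even_count_pair_iff] at h
  simpa using h

lemma integral_mul_mul_mul_of_rademacher (hmeas : ∀ i, Measurable fun ω => r ω i)
    (hindep : iIndepFun (fun i ω => r ω i) μ)
    (hdist : ∀ i, μ.map (fun ω => r ω i) = rademacher) (i j k l : ι) :
    ∫ ω, r ω i * r ω j * r ω k * r ω l ∂μ =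
      (if i = j ∧ k = l then 1 else 0) + (if i = k ∧ j = l then 1 else 0)
        + (if i = l ∧ j = k then 1 else 0) - 2 * (if i = j ∧ j = k ∧ k = l then 1 else 0) := by
  have h := integral_multiset_prod_of_rademacher hmeas hindep hdist {i, j, k, l}
  simp only [Multiset.forall_even_count_quadruple_iff] at h
  simp only [Multiset.insert_eq_cons, Multiset.map_cons, Multiset.prod_cons,
    Multiset.map_singleton, Multiset.prod_singleton, ← mul_assoc] at h
  rw [h]
  by_cases h1 : i = j <;> by_cases h2 : i = k <;> by_cases h3 : i = l <;>
    by_cases h4 : j = k <;> by_cases h5 : j = l <;> by_cases h6 : k = l <;>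
    simp_all
  norm_num

end RademacherFamily

/-- Variance of the Hutchinson estimator `rᵀ H r` with i.i.d. Rademacher
probe vectors: `Var[rᵀ H r] = 2(‖H‖_F² − Σᵢ Hᵢᵢ²)`. -/
theorem hutchinson_variance
    {Ω : Type*} [MeasurableSpace Ω] (μ : Measure Ω) [IsProbabilityMeasure μ]
    {n : ℕ} (r : Ω → Fin n → ℝ)
    (hmeas : ∀ i, Measurable fun ω => r ω i)
    (hindep : iIndepFun (fun i ω => r ω i) μ)
    (hdist : ∀ i, μ.map (fun ω => r ω i) = rademacher)
    (H : Matrix (Fin n) (Fin n) ℝ) (hH : H.IsSymm) :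
    variance (fun ω => (r ω) ⬝ᵥ H.mulVec (r ω)) μ
      = 2 * ((∑ i, ∑ j, H i j ^ 2) - ∑ i, H i i ^ 2) := by
  have hint2 (i j : Fin n) : Integrable (fun ω => r ω i * r ω j) μ := by
    simpa using integrable_multiset_prod_of_rademacher hmeas hdist {i, j}
  have hint4 (i j k l : Fin n) : Integrable (fun ω => r ω i * r ω j * r ω k * r ω l) μ := by
    simpa [mul_assoc] using integrable_multiset_prod_of_rademacher hmeas hdist {i, j, k, l}
  have hmean : ∫ ω, r ω ⬝ᵥ H *ᵥ r ω ∂μ = ∑ i, H i i := by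
    simp [integral_dotProduct_mulVec_self H hint2, integral_mul_of_rademacher hmeas hindep hdist]
  have hsecond : ∫ ω, (r ω ⬝ᵥ H *ᵥ r ω) ^ 2 ∂μ
      = (∑ i, H i i) ^ 2 + 2 * ((∑ i, ∑ j, H i j ^ 2) - ∑ i, H i i ^ 2) := by
    have hsymm (i j : Fin n) : H i j * H j i = H i j * H i j := by rw [hH.apply]
    simp only [integral_sq_dotProduct_mulVec_self H hint4,
      integral_mul_mul_mul_of_rademacher hmeas hindep hdist, ite_and, mul_ite, mul_one, mul_zero,
      mul_sub, mul_add, sum_sub_distrib, sum_add_distrib, sum_ite_irrel, sum_ite_eq, mem_univ,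
      if_true, sum_const_zero]
    simp only [hsymm, sq, sum_mul_sum, ← sum_mul]
    ring
  rw [variance_eq_sub (memLp_two_dotProduct_mulVec_self H hmeas hint4)]
  simp only [Pi.pow_def, hmean, hsecond]
  ring
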